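/- arXiv:0801.2844 — 2 statements merged into one kernel-verified Lean document; each statement's English description precedes it below -/
import Mathlib

section
/- Let x be an irrational real number with partial quotients (aₖ(x)). If a_{2n}(x) > 1 for infinitely many n ∈ ℕ, then for every ε > 0 there exists an irrational α⁻ with x − ε < α⁻ < x and B(α⁻) < B(x). Symmetrically, if a_{2n+1}(x) > 1 for infinitely many n ∈ ℕ, then for every ε > 0 there exists an irrational α⁺ with x < α⁺ < x + ε and B(α⁺) < B(x). -/
open scoped ENNReal Topology

noncomputable def gaussIter (x : ℝ) : ℕ → ℝ
  | 0 => Int.fract x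
  | n + 1 => Int.fract (gaussIter x n)⁻¹

noncomputable def pquot (x : ℝ) : ℕ → ℤ
  | 0 => ⌊x⌋
  | n + 1 => ⌊(gaussIter x n)⁻¹⌋

noncomputable def qden (x : ℝ) : ℕ → ℤ
  | 0 => 1
  | 1 => pquot x 1
  | n + 2 => pquot x (n + 2) * qden x (n + 1) + qden x n

noncomputable def pnum (x : ℝ) : ℕ → ℤ
  | 0 => pquot x 0
  | 1 => pquot x 1 * pquot x 0 + 1
  | n + 2 => pquot x (n + 2) * pnum x (n + 1) + pnum x n

noncomputable def brjunoTerm (x : ℝ) (k : ℕ) : ℝ :=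
  Real.log (pquot x (k + 1)) / (qden x k : ℝ)

open Classical in
noncomputable def brjuno (x : ℝ) : ℝ≥0∞ :=
  if Irrational x then ∑' k, ENNReal.ofReal (brjunoTerm x k) else ⊤

noncomputable def brjunoTailE (x : ℝ) (n : ℕ) : ℝ≥0∞ :=
  ∑' k, ENNReal.ofReal (brjunoTerm x (n + k))

noncomputable def cfLen (x : ℝ) : ℕ := sInf {n | gaussIter x n = 0}

noncomputable def brjunoFinite (x : ℝ) : ℝ :=
  ∑ k ∈ Finset.range (cfLen x), Real.log (pquot x (k + 1)) / (qden x k : ℝ)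

def brjunoSuper (t : ℝ) : Set ℝ := {x | ENNReal.ofReal t < brjuno x}

def IsCompOf (A : Set ℝ) (a b : ℝ) : Prop := ∃ x ∈ A, connectedComponentIn A x = Set.Ioo a b

def diamond (κ a b : ℝ) : Set ℂ :=
  {z : ℂ | a < z.re ∧ z.re < b ∧ |z.im| ≤ κ * min (z.re - a) (b - z.re)}

noncomputable def CMset (κ M : ℝ) : Set ℂ :=
  (fun ξ : ℂ => Complex.exp (2 * Real.pi * Complex.I * ξ)) ''
    (⋃ (a : ℝ) (b : ℝ) (_ : IsCompOf (brjunoSuper M) a b), diamond κ a b)ᶜ ∪ {0}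

/-!
If `aₘ₊₁(x) ≥ 2`, let `α = [a₀; a₁, …, aₘ, 1, 1, …]`. Its Brjuno series agrees with that of `x`
in the terms `k < m` and vanishes from then on (`log 1 = 0`), while `x` still has the positive
term `log aₘ₊₁ / qₘ`; so `B(α) < B(x)`. Comparing complete quotients `xₖ, αₖ` step by step gives
`x - α = (-1)ⁿ (xₙ - αₙ) / ∏_{1 ≤ k ≤ n} xₖ αₖ` for `n ≤ m + 1`. With `n = m` this yields
`|x - α| ≤ 2^(-⌊m/2⌋)`, as `xₖ xₖ₊₁ > 2`; with `n = m + 1` and `αₘ₊₁ = φ < 2 < xₘ₊₁` it shows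
that `α < x` for odd `m` and `α > x` for even `m`. Large even (odd) indices `m + 1` then give
approximations from the left (right).
-/

open Finset Filter

/-- `u k = [b k; b (k + 1), b (k + 2), …]`, the complete quotients of the continued fraction
with partial quotients `b`. -/
def IsCompleteQuotients (b : ℕ → ℤ) (u : ℕ → ℝ) : Prop :=
  ∀ k, 1 < u (k + 1) ∧ u k = b k + (u (k + 1))⁻¹

namespace IsCompleteQuotients

variable {b c : ℕ → ℤ} {u w : ℕ → ℝ}

lemma pos (h : IsCompleteQuotients b u) (k : ℕ) : 0 < u (k + 1) :=
  one_pos.trans (h k).1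

lemma inv_mem_Ioo (h : IsCompleteQuotients b u) (k : ℕ) : (u (k + 1))⁻¹ ∈ Set.Ioo 0 1 :=
  ⟨inv_pos.2 (h.pos k), inv_lt_one_of_one_lt₀ (h k).1⟩

lemma fract_eq (h : IsCompleteQuotients b u) (k : ℕ) : Int.fract (u k) = (u (k + 1))⁻¹ := by
  obtain ⟨h0, h1⟩ := h.inv_mem_Ioo k
  rw [Int.fract_eq_iff]
  exact ⟨h0.le, h1, b k, by rw [(h k).2]; ring⟩

lemma floor_eq (h : IsCompleteQuotients b u) (k : ℕ) : ⌊u k⌋ = b k := by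
  rw [(h k).2, Int.floor_intCast_add, Int.floor_eq_zero_iff.2 (Set.Ioo_subset_Ico_self
    (h.inv_mem_Ioo k)), add_zero]

lemma gaussIter_eq (h : IsCompleteQuotients b u) : ∀ k, gaussIter (u 0) k = (u (k + 1))⁻¹
  | 0 => h.fract_eq 0
  | k + 1 => by rw [gaussIter, gaussIter_eq h k, inv_inv, h.fract_eq]

lemma pquot_eq (h : IsCompleteQuotients b u) : ∀ k, pquot (u 0) k = b k
  | 0 => h.floor_eq 0
  | k + 1 => by rw [pquot, h.gaussIter_eq, inv_inv, h.floor_eq]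

lemma one_le (h : IsCompleteQuotients b u) (k : ℕ) : 1 ≤ b (k + 1) := by
  rw [← h.floor_eq]
  exact Int.le_floor.2 (by exact_mod_cast (h k).1.le)

lemma irrational_zero_of_irrational (h : IsCompleteQuotients b u) :
    ∀ n, Irrational (u n) → Irrational (u 0) := by
  suffices ∀ n k, Irrational (u (k + n)) → Irrational (u k) from fun n => this n 0 ∘ by simp
  intro n
  induction n with
  | zero => exact fun _ => id
  | succ n ih =>
    intro k hn
    rw [(h k).2]
    exact (ih (k + 1) (by rwa [add_right_comm])).inv.intCast_add _

lemma two_lt_mul_succ (h : IsCompleteQuotients b u) (k : ℕ) : 2 < u (k + 1) * u (k + 2) := by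
  have hb : (1 : ℝ) ≤ b (k + 1) := by exact_mod_cast h.one_le k
  have hu := h (k + 1)
  have hmul : u (k + 1) * u (k + 2) = b (k + 1) * u (k + 2) + 1 := by
    rw [hu.2, add_mul, inv_mul_cancel₀ (h.pos (k + 1)).ne']
  nlinarith

lemma two_pow_half_le_prod (h : IsCompleteQuotients b u) :
    ∀ n, (2 : ℝ) ^ (n / 2) ≤ ∏ k ∈ range n, u (k + 1)
  | 0 => by simp
  | 1 => by simpa using (h 0).1.le
  | n + 2 => by
    have hprod : ∏ k ∈ range (n + 2), u (k + 1)
        = (∏ k ∈ range n, u (k + 1)) * (u (n + 1) * u (n + 2)) := by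
      rw [prod_range_succ, prod_range_succ, mul_assoc]
    rw [hprod, show (n + 2) / 2 = n / 2 + 1 by omega, pow_succ]
    exact mul_le_mul (two_pow_half_le_prod h n) (h.two_lt_mul_succ n).le zero_le_two
      ((pow_pos two_pos _).le.trans (two_pow_half_le_prod h n))

lemma sub_eq (hu : IsCompleteQuotients b u) (hw : IsCompleteQuotients c w) :
    ∀ n, (∀ k < n, b k = c k) →
      u 0 - w 0 = (-1) ^ n * (u n - w n) / ∏ k ∈ range n, (u (k + 1) * w (k + 1))
  | 0, _ => by simp
  | n + 1, hbc => by
    have hstep : u n - w n = (w (n + 1) - u (n + 1)) / (u (n + 1) * w (n + 1)) := by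
      rw [(hu n).2, (hw n).2, hbc n n.lt_succ_self]
      field_simp [(hu.pos n).ne', (hw.pos n).ne']
      ring
    rw [sub_eq hu hw n (fun k hk => hbc k (by omega)), hstep, prod_range_succ]
    field_simp
    ring

lemma abs_sub_le_one (hu : IsCompleteQuotients b u) (hw : IsCompleteQuotients c w) {n : ℕ}
    (hbc : b n = c n) : |u n - w n| ≤ 1 := by
  obtain ⟨hu0, hu1⟩ := hu.inv_mem_Ioo n
  obtain ⟨hw0, hw1⟩ := hw.inv_mem_Ioo n
  rw [(hu n).2, (hw n).2, hbc, abs_le]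
  constructor <;> linarith

end IsCompleteQuotients

noncomputable def completeQuot (x : ℝ) : ℕ → ℝ
  | 0 => x
  | k + 1 => (gaussIter x k)⁻¹

lemma gaussIter_mem_Ioo {x : ℝ} (hx : Irrational x) (k : ℕ) : gaussIter x k ∈ Set.Ioo 0 1 := by
  have hirr : Irrational (gaussIter x k) := by
    induction k with
    | zero => exact hx.sub_intCast ⌊x⌋
    | succ k ih => exact ih.inv.sub_intCast _
  cases k <;>
    exact ⟨(Int.fract_nonneg _).lt_of_ne' hirr.ne_zero, Int.fract_lt_one _⟩

lemma isCompleteQuotients_completeQuot {x : ℝ} (hx : Irrational x) :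
    IsCompleteQuotients (pquot x) (completeQuot x) := by
  intro k
  obtain ⟨h0, h1⟩ := gaussIter_mem_Ioo hx k
  refine ⟨(one_lt_inv₀ h0).2 h1, ?_⟩
  rw [completeQuot, inv_inv, ← sub_eq_iff_eq_add']
  cases k <;> rfl

noncomputable def truncPquot (x : ℝ) (m k : ℕ) : ℤ := if k ≤ m then pquot x k else 1

noncomputable def goldenTailAux (x : ℝ) (m : ℕ) : ℕ → ℝ
  | 0 => Real.goldenRatio
  | j + 1 => pquot x (m - j) + (goldenTailAux x m j)⁻¹

/-- The complete quotients of `[a₀; a₁, …, aₘ, 1, 1, …]`, built backwards from the tail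
`φ = [1; 1, …]`; past `m` the truncated subtraction `m + 1 - k` is `0`. -/
noncomputable def goldenTail (x : ℝ) (m k : ℕ) : ℝ := goldenTailAux x m (m + 1 - k)

lemma goldenTail_of_lt {x : ℝ} {m k : ℕ} (hk : m < k) : goldenTail x m k = Real.goldenRatio := by
  rw [goldenTail, Nat.sub_eq_zero_of_le hk, goldenTailAux]

lemma isCompleteQuotients_goldenTail {x : ℝ} (hx : Irrational x) (m : ℕ) :
    IsCompleteQuotients (truncPquot x m) (goldenTail x m) := by
  have hrec : ∀ k, goldenTail x m k = truncPquot x m k + (goldenTail x m (k + 1))⁻¹ := by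
    intro k
    rcases le_or_gt k m with hk | hk
    · rw [goldenTail, goldenTail, show m + 1 - k = (m - k) + 1 by omega, goldenTailAux,
        truncPquot, if_pos hk, show m + 1 - (k + 1) = m - k by omega, Nat.sub_sub_self hk]
    · rw [goldenTail_of_lt hk, goldenTail_of_lt (by omega), truncPquot, if_neg (by omega),
        Real.inv_goldenRatio, Int.cast_one, ← sub_eq_add_neg, Real.one_sub_goldenRatio]
  have haux : ∀ j ≤ m, 1 < goldenTailAux x m j := by
    intro j hj
    induction j with
    | zero => exact Real.one_lt_goldenRatio
    | succ j ih =>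
      have hb : (1 : ℝ) ≤ pquot x (m - j) := by
        obtain ⟨i, hi⟩ : ∃ i, m - j = i + 1 := ⟨m - j - 1, by omega⟩
        rw [hi]
        exact_mod_cast (isCompleteQuotients_completeQuot hx).one_le i
      have := inv_pos.2 (one_pos.trans (ih (by omega)))
      rw [goldenTailAux]
      linarith
  exact fun k => ⟨haux _ (by omega), hrec k⟩

lemma irrational_goldenTail {x : ℝ} (hx : Irrational x) (m : ℕ) : Irrational (goldenTail x m 0) :=
  (isCompleteQuotients_goldenTail hx m).irrational_zero_of_irrational (m + 1)
    (by rw [goldenTail_of_lt m.lt_succ_self]; exact Real.goldenRatio_irrational)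

lemma abs_sub_goldenTail_le {x : ℝ} (hx : Irrational x) (m : ℕ) :
    |x - goldenTail x m 0| ≤ ((2 : ℝ) ^ (m / 2))⁻¹ := by
  have hu := isCompleteQuotients_completeQuot hx
  have hw := isCompleteQuotients_goldenTail hx m
  set u := completeQuot x
  set w := goldenTail x m
  have hprod : ∏ k ∈ range m, u (k + 1) ≤ ∏ k ∈ range m, (u (k + 1) * w (k + 1)) :=
    prod_le_prod (fun k _ => (hu.pos k).le)
      (fun k _ => le_mul_of_one_le_right (hu.pos k).le (hw k).1.le)
  have hP : 0 < ∏ k ∈ range m, (u (k + 1) * w (k + 1)) :=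
    prod_pos fun k _ => mul_pos (hu.pos k) (hw.pos k)
  have hdiff := hu.sub_eq hw m fun k hk => (if_pos hk.le).symm
  change |u 0 - w 0| ≤ _
  rw [hdiff, abs_div, abs_mul, abs_pow, abs_neg, abs_one, one_pow, one_mul, abs_of_pos hP]
  calc |u m - w m| / ∏ k ∈ range m, (u (k + 1) * w (k + 1))
      ≤ 1 / ∏ k ∈ range m, (u (k + 1) * w (k + 1)) :=
        div_le_div_of_nonneg_right (hu.abs_sub_le_one hw (if_pos le_rfl).symm) hP.le
    _ ≤ ((2 : ℝ) ^ (m / 2))⁻¹ := by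
        rw [one_div]
        exact inv_anti₀ (by positivity) ((hu.two_pow_half_le_prod m).trans hprod)

lemma neg_one_pow_mul_sub_goldenTail_pos {x : ℝ} (hx : Irrational x) {m : ℕ}
    (h2 : 2 ≤ pquot x (m + 1)) : 0 < (-1) ^ (m + 1) * (x - goldenTail x m 0) := by
  have hu := isCompleteQuotients_completeQuot hx
  have hw := isCompleteQuotients_goldenTail hx m
  set u := completeQuot x
  set w := goldenTail x m
  have hdiff := hu.sub_eq hw (m + 1) fun k hk => (if_pos (Nat.lt_succ_iff.1 hk)).symm
  have hgap : 0 < u (m + 1) - w (m + 1) := by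
    have hb : (2 : ℝ) ≤ pquot x (m + 1) := by exact_mod_cast h2
    have := (hu.inv_mem_Ioo (m + 1)).1
    rw [(hu (m + 1)).2, show w (m + 1) = Real.goldenRatio from goldenTail_of_lt m.lt_succ_self]
    linarith [Real.goldenRatio_lt_two]
  have hsq : ((-1 : ℝ) ^ (m + 1)) * (-1) ^ (m + 1) = 1 := by
    rw [← mul_pow, neg_one_mul, neg_neg, one_pow]
  change 0 < (-1) ^ (m + 1) * (u 0 - w 0)
  rw [hdiff, ← mul_div_assoc, ← mul_assoc, hsq, one_mul]
  exact div_pos hgap (prod_pos fun k _ => mul_pos (hu.pos k) (hw.pos k))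

lemma qden_eq_of_pquot_eq {x y : ℝ} :
    ∀ n, (∀ k ≤ n, pquot x k = pquot y k) → qden x n = qden y n
  | 0, _ => rfl
  | 1, h => h 1 le_rfl
  | n + 2, h => by
    rw [qden, qden, h (n + 2) le_rfl, qden_eq_of_pquot_eq (n + 1) fun k hk => h k (by omega),
      qden_eq_of_pquot_eq n fun k hk => h k (by omega)]

lemma one_le_qden {x : ℝ} (hb : ∀ k, 1 ≤ pquot x (k + 1)) : ∀ n, 1 ≤ qden x n
  | 0 => le_rfl
  | 1 => hb 0
  | n + 2 => by
    rw [qden]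
    nlinarith [hb (n + 1), one_le_qden hb (n + 1), one_le_qden hb n]

lemma brjuno_eq_sum_range {α : ℝ} (hα : Irrational α) {m : ℕ}
    (h1 : ∀ k, m ≤ k → pquot α (k + 1) = 1) :
    brjuno α = ∑ k ∈ range m, ENNReal.ofReal (brjunoTerm α k) := by
  rw [brjuno, if_pos hα]
  refine tsum_eq_sum fun k hk => ?_
  rw [brjunoTerm, h1 k (by simpa using hk)]
  simp

lemma sum_range_lt_brjuno {x : ℝ} (hx : Irrational x) {m : ℕ} (h2 : 2 ≤ pquot x (m + 1)) :
    ∑ k ∈ range m, ENNReal.ofReal (brjunoTerm x k) < brjuno x := by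
  have hterm : 0 < ENNReal.ofReal (brjunoTerm x m) := by
    have hq : (1 : ℝ) ≤ qden x m := by
      exact_mod_cast one_le_qden (isCompleteQuotients_completeQuot hx).one_le m
    have hb : (2 : ℝ) ≤ pquot x (m + 1) := by exact_mod_cast h2
    exact ENNReal.ofReal_pos.2 (div_pos ((Real.log_pos one_lt_two).trans_le
      (Real.log_le_log two_pos hb)) (one_pos.trans_le hq))
  rw [brjuno, if_pos hx]
  calc ∑ k ∈ range m, ENNReal.ofReal (brjunoTerm x k)
      < ∑ k ∈ range (m + 1), ENNReal.ofReal (brjunoTerm x k) := by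
        rw [sum_range_succ]
        exact ENNReal.lt_add_right (ENNReal.sum_ne_top.2 fun _ _ => ENNReal.ofReal_ne_top)
          hterm.ne'
    _ ≤ ∑' k, ENNReal.ofReal (brjunoTerm x k) := ENNReal.sum_le_tsum _

lemma brjuno_goldenTail_lt {x : ℝ} (hx : Irrational x) {m : ℕ} (h2 : 2 ≤ pquot x (m + 1)) :
    brjuno (goldenTail x m 0) < brjuno x := by
  have hp := (isCompleteQuotients_goldenTail hx m).pquot_eq
  have hpk : ∀ k ≤ m, pquot (goldenTail x m 0) k = pquot x k := fun k hk => by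
    rw [hp, truncPquot, if_pos hk]
  rw [brjuno_eq_sum_range (m := m) (irrational_goldenTail hx m) fun k hk => by
    rw [hp, truncPquot, if_neg (by omega)]]
  convert sum_range_lt_brjuno hx h2 using 2 with k hk
  have hk : k < m := mem_range.1 hk
  rw [brjunoTerm, brjunoTerm, hpk (k + 1) hk,
    qden_eq_of_pquot_eq k fun i hi => hpk i (by omega)]

lemma exists_brjuno_lt_of_frequently {x : ℝ} (hx : Irrational x) {σ : ℝ}
    (hfreq : ∃ᶠ m in atTop, 2 ≤ pquot x (m + 1) ∧ (-1) ^ (m + 1) = σ) {ε : ℝ} (hε : 0 < ε) :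
    ∃ α, Irrational α ∧ |x - α| < ε ∧ 0 < σ * (x - α) ∧ brjuno α < brjuno x := by
  have hlim : Tendsto (fun m : ℕ => ((2 : ℝ) ^ (m / 2))⁻¹) atTop (𝓝 0) :=
    tendsto_inv_atTop_zero.comp ((tendsto_pow_atTop_atTop_of_one_lt one_lt_two).comp
      (Nat.tendsto_div_const_atTop two_ne_zero))
  obtain ⟨m, ⟨h2, hσ⟩, hm⟩ := (hfreq.and_eventually (hlim.eventually (gt_mem_nhds hε))).exists
  exact ⟨goldenTail x m 0, irrational_goldenTail hx m, (abs_sub_goldenTail_le hx m).trans_lt hm,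
    hσ ▸ neg_one_pow_mul_sub_goldenTail_pos hx h2, brjuno_goldenTail_lt hx h2⟩

/-- points with infinitely many even (resp. odd) indexed partial quotients
bigger than 1 can be approximated from the left (resp. right) by points with strictly
smaller Brjuno value. -/
theorem statement2 (x : ℝ) (hx : Irrational x) :
    ((∀ N : ℕ, ∃ n, N ≤ n ∧ 1 < pquot x (2 * n)) →
      ∀ ε : ℝ, 0 < ε → ∃ α : ℝ, Irrational α ∧ x - ε < α ∧ α < x ∧ brjuno α < brjuno x) ∧
    ((∀ N : ℕ, ∃ n, N ≤ n ∧ 1 < pquot x (2 * n + 1)) →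
      ∀ ε : ℝ, 0 < ε → ∃ α : ℝ, Irrational α ∧ x < α ∧ α < x + ε ∧ brjuno α < brjuno x) := by
  refine ⟨fun h ε hε => ?_, fun h ε hε => ?_⟩
  · have hfreq : ∃ᶠ m in atTop, 2 ≤ pquot x (m + 1) ∧ (-1 : ℝ) ^ (m + 1) = 1 := by
      refine frequently_atTop.2 fun N => ?_
      obtain ⟨n, hn, h1⟩ := h (N + 1)
      refine ⟨2 * n - 1, by omega, ?_⟩
      rw [show 2 * n - 1 + 1 = 2 * n by omega]
      exact ⟨h1, Even.neg_one_pow ⟨n, two_mul n⟩⟩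
    obtain ⟨α, hα, hdist, hsign, hB⟩ := exists_brjuno_lt_of_frequently hx hfreq hε
    exact ⟨α, hα, by linarith [le_abs_self (x - α)], by linarith, hB⟩
  · have hfreq : ∃ᶠ m in atTop, 2 ≤ pquot x (m + 1) ∧ (-1 : ℝ) ^ (m + 1) = -1 := by
      refine frequently_atTop.2 fun N => ?_
      obtain ⟨n, hn, h1⟩ := h N
      exact ⟨2 * n, by omega, h1, Odd.neg_one_pow ⟨n, rfl⟩⟩
    obtain ⟨α, hα, hdist, hsign, hB⟩ := exists_brjuno_lt_of_frequently hx hfreq hε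
    exact ⟨α, hα, by linarith, by linarith [neg_abs_le (x - α)], hB⟩
end

section
/- Let t ≥ 0 and let (ξ⁻, ξ⁺) be a connected component of A_t = { x ∈ ℝ : B(x) > t } containing no integer. Write ξ⁻ = [a₀; a₁, …, a_{N−1}, a_N⁻, a_{N+1}⁻, …] and ξ⁺ = [a₀; a₁, …, a_{N−1}, a_N⁺, a_{N+1}⁺, …], where N ≥ 1 is the first index at which the two continued fraction expansions differ. Then: if N is even, a_N⁺ ≥ 2, a_N⁻ = a_N⁺ − 1, a⁺_{N+2k} = 1 for all k ≥ 1, and a⁻_{N+2k+1} = 1 for all k ≥ 0; if N is odd, a_N⁻ ≥ 2, a_N⁺ = a_N⁻ − 1, a⁻_{N+2k} = 1 for all k ≥ 1, and a⁺_{N+2k+1} = 1 for all k ≥ 0. -/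
open scoped ENNReal Topology

/-! The endpoints `ξ⁻ < ξ⁺` are irrational with `B ≤ t`, while every point strictly between them
has `B > t`. If an endpoint `ξ` has a partial quotient `a_M ≥ 2`, lowering it by one and replacing
all later quotients by `1` gives a number `y` with `B(y) ≤ B(ξ)`: no term of the Brjuno series
grows, since `q_0, …, q_{M-1}` are unchanged and `log 1 = 0`. Continued fractions order the reals
lexicographically, with the order reversed at odd indices, so if any of the claimed equalities
failed, such a `y` built from `ξ⁻` or `ξ⁺` would lie strictly between them. -/

theorem gaussIter_succ (x : ℝ) (n : ℕ) : gaussIter x (n + 1) = gaussIter (Int.fract x)⁻¹ n := by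
  induction n with
  | zero => rfl
  | succ n ih => rw [gaussIter, ih, gaussIter]

theorem pquot_succ (x : ℝ) (n : ℕ) : pquot x (n + 1) = pquot (Int.fract x)⁻¹ n := by
  cases n with
  | zero => rfl
  | succ n => rw [pquot, pquot, gaussIter_succ]

theorem pquot_intCast_add_inv_zero (a : ℤ) {z : ℝ} (hz : 1 < z) : pquot (a + z⁻¹) 0 = a := by
  rw [pquot, Int.floor_intCast_add,
    Int.floor_eq_zero_iff.2 ⟨by positivity, inv_lt_one_of_one_lt₀ hz⟩, add_zero]

theorem pquot_intCast_add_inv_succ (a : ℤ) {z : ℝ} (hz : 1 < z) (n : ℕ) :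
    pquot (a + z⁻¹) (n + 1) = pquot z n := by
  rw [pquot_succ, Int.fract_intCast_add,
    Int.fract_eq_self.2 ⟨by positivity, inv_lt_one_of_one_lt₀ hz⟩, inv_inv]

theorem Irrational.inv_fract {x : ℝ} (hx : Irrational x) : Irrational (Int.fract x)⁻¹ := by
  rw [Int.fract]
  exact (hx.sub_intCast _).inv

theorem Irrational.one_lt_inv_fract {x : ℝ} (hx : Irrational x) : 1 < (Int.fract x)⁻¹ := by
  have hne : Int.fract x ≠ 0 := by
    rw [Int.fract]
    exact (hx.sub_intCast _).ne_zero
  exact one_lt_inv_iff₀.2 ⟨(Int.fract_nonneg x).lt_of_ne' hne, Int.fract_lt_one x⟩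

theorem one_le_pquot {x : ℝ} (hx : Irrational x) {n : ℕ} (hn : 1 ≤ n) : 1 ≤ pquot x n := by
  obtain ⟨n, rfl⟩ := Nat.exists_eq_add_of_le' hn
  induction n generalizing x with
  | zero => exact Int.le_floor.2 (by exact_mod_cast hx.one_lt_inv_fract.le)
  | succ n ih => rw [pquot_succ]; exact ih hx.inv_fract (by omega)

theorem qden_nonneg {x : ℝ} (hx : Irrational x) : ∀ k, 0 ≤ qden x k
  | 0 => zero_le_one
  | 1 => (one_le_pquot hx le_rfl).trans' zero_le_one
  | k + 2 => add_nonneg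
      (mul_nonneg ((one_le_pquot hx (by omega)).trans' zero_le_one) (qden_nonneg hx (k + 1)))
      (qden_nonneg hx k)

theorem qden_congr {x y : ℝ} :
    ∀ k, (∀ j ≤ k, pquot x j = pquot y j) → qden x k = qden y k
  | 0, _ => rfl
  | 1, h => by rw [qden, qden, h 1 le_rfl]
  | k + 2, h => by
    rw [qden, qden, qden_congr (k + 1) fun j hj => h j (by omega),
      qden_congr k fun j hj => h j (by omega), h (k + 2) le_rfl]

theorem brjunoTerm_nonneg {x : ℝ} (hx : Irrational x) (k : ℕ) : 0 ≤ brjunoTerm x k :=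
  div_nonneg (Real.log_nonneg (by exact_mod_cast one_le_pquot hx (Nat.le_add_left 1 k)))
    (by exact_mod_cast qden_nonneg hx k)

theorem brjuno_le_brjuno {x y : ℝ} (hx : Irrational x) (hy : Irrational y)
    (h : ∀ k, brjunoTerm x k ≤ brjunoTerm y k) : brjuno x ≤ brjuno y := by
  rw [brjuno, brjuno, if_pos hx, if_pos hy]
  exact ENNReal.tsum_le_tsum fun k => ENNReal.ofReal_le_ofReal (h k)

theorem irrational_of_brjuno_ne_top {x : ℝ} (h : brjuno x ≠ ⊤) : Irrational x := by
  by_contra hx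
  exact h (if_neg hx)

open Real goldenRatio in
theorem pquot_goldenRatio (n : ℕ) : pquot φ n = 1 := by
  have hfloor : ⌊φ⌋ = 1 := Int.floor_eq_iff.2 ⟨by simpa using one_lt_goldenRatio.le,
    by push_cast; linarith [goldenRatio_lt_two]⟩
  have hφ : (Int.fract φ)⁻¹ = φ := by
    rw [Int.fract, hfloor, Int.cast_one,
      show φ - 1 = φ⁻¹ by rw [inv_goldenRatio, ← one_sub_goldenConj]; ring, inv_inv]
  induction n with
  | zero => exact hfloor
  | succ n ih => rwa [pquot_succ, hφ]

theorem exists_irrational_pquot_cons (a : ℤ) {z : ℝ} (hz : Irrational z) (hz0 : 1 ≤ pquot z 0) :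
    ∃ y, Irrational y ∧ pquot y 0 = a ∧ ∀ n, pquot y (n + 1) = pquot z n := by
  have hz1 : 1 < z := by
    have h1 : (1 : ℝ) ≤ z := by exact_mod_cast (Int.le_floor.1 hz0)
    exact h1.lt_of_ne (by rintro rfl; exact hz.ne_one rfl)
  exact ⟨a + z⁻¹, hz.inv.intCast_add _, pquot_intCast_add_inv_zero _ hz1,
    pquot_intCast_add_inv_succ _ hz1⟩

theorem exists_irrational_pquot_eq (M : ℕ) (a : ℕ → ℤ) (hpos : ∀ j, 1 ≤ a (j + 1))
    (htail : ∀ j, M < j → a j = 1) : ∃ y, Irrational y ∧ pquot y = a := by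
  obtain ⟨z, hz, hza⟩ : ∃ z, Irrational z ∧ pquot z = fun j => a (j + 1) := by
    cases M with
    | zero => exact ⟨Real.goldenRatio, Real.goldenRatio_irrational,
        funext fun j => (pquot_goldenRatio j).trans (htail (j + 1) (by omega)).symm⟩
    | succ M =>
      exact exists_irrational_pquot_eq M (fun j => a (j + 1)) (fun j => hpos (j + 1))
        fun j hj => htail (j + 1) (by omega)
  obtain ⟨y, hy, hy0, hys⟩ := exists_irrational_pquot_cons (a 0) hz (hza ▸ hpos 0)
  refine ⟨y, hy, funext fun n => ?_⟩
  cases n with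
  | zero => exact hy0
  | succ n => exact (hys n).trans (congrFun hza n)

theorem exists_brjuno_le_of_two_le_pquot {ξ : ℝ} (hξ : Irrational ξ) {M : ℕ}
    (h2 : 2 ≤ pquot ξ M) :
    ∃ y, Irrational y ∧ brjuno y ≤ brjuno ξ ∧ (∀ j < M, pquot y j = pquot ξ j) ∧
      pquot y M = pquot ξ M - 1 := by
  obtain ⟨y, hy, hya⟩ := exists_irrational_pquot_eq M
    (fun j => if j < M then pquot ξ j else if j = M then pquot ξ M - 1 else 1)
    (fun j => by
      split_ifs with h h'
      · exact one_le_pquot hξ (by omega)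
      · omega
      · exact le_rfl)
    (fun j hj => by simp [hj.not_gt, hj.ne'])
  have hlt : ∀ j < M, pquot y j = pquot ξ j := fun j hj => by simp [hya, hj]
  have hM' : pquot y M = pquot ξ M - 1 := by simp [hya]
  refine ⟨y, hy, brjuno_le_brjuno hy hξ fun k => ?_, hlt, hM'⟩
  rcases lt_or_ge k M with hk | hk
  · have hle : pquot y (k + 1) ≤ pquot ξ (k + 1) := by
      obtain hk' | rfl : k + 1 < M ∨ k + 1 = M := by omega
      · exact (hlt _ hk').le
      · rw [hM']
        omega
    rw [brjunoTerm, brjunoTerm, qden_congr k fun j hj => hlt j (by omega)]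
    gcongr
    · exact_mod_cast qden_nonneg hξ k
    · exact_mod_cast (one_le_pquot hy (Nat.le_add_left 1 k)).trans_lt' zero_lt_one
  · have hone : pquot y (k + 1) = 1 := by
      simp [hya, show ¬ k + 1 < M by omega, show k + 1 ≠ M by omega]
    rw [brjunoTerm, hone, Int.cast_one, Real.log_one, zero_div]
    exact brjunoTerm_nonneg hξ k

theorem neg_one_pow_mul_sub_pos_of_pquot_lt {x y : ℝ} (hx : Irrational x) (hy : Irrational y)
    {m : ℕ} (hagree : ∀ k < m, pquot x k = pquot y k) (hlt : pquot x m < pquot y m) :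
    0 < (-1) ^ m * (y - x) := by
  induction m generalizing x y with
  | zero => simpa using (Int.floor_lt.1 hlt).trans_le (Int.floor_le y)
  | succ m ih =>
    have htail := ih hx.inv_fract hy.inv_fract
      (fun k hk => by simpa only [pquot_succ] using hagree (k + 1) (by omega))
      (by simpa only [pquot_succ] using hlt)
    have hx0 : 0 < Int.fract x := inv_pos.1 (zero_lt_one.trans hx.one_lt_inv_fract)
    have hy0 : 0 < Int.fract y := inv_pos.1 (zero_lt_one.trans hy.one_lt_inv_fract)
    have hsub : y - x = Int.fract y - Int.fract x := by
      have hfloor : (⌊x⌋ : ℝ) = ⌊y⌋ := by exact_mod_cast hagree 0 (by omega)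
      rw [Int.fract, Int.fract, hfloor]
      ring
    have key : (-1) ^ (m + 1) * (y - x) =
        (-1) ^ m * ((Int.fract y)⁻¹ - (Int.fract x)⁻¹) * (Int.fract x * Int.fract y) := by
      rw [hsub]
      field_simp
      ring
    rw [key]
    positivity

theorem mem_uIoo_of_neg_one_pow_mul_pos {u v y : ℝ} {m : ℕ} (hu : 0 < (-1) ^ m * (y - u))
    (hv : 0 < (-1) ^ m * (v - y)) : y ∈ Set.uIoo u v := by
  rcases neg_one_pow_eq_or ℝ m with h | h <;> rw [h] at hu hv
  · exact Set.mem_uIoo_of_lt (by linarith) (by linarith)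
  · exact Set.mem_uIoo_of_gt (by linarith) (by linarith)

theorem pquot_of_forall_brjuno_le_notMem_uIoo {u v : ℝ} (hu : Irrational u)
    (hv : Irrational v) {T : ℝ≥0∞} (huT : brjuno u ≤ T) (hvT : brjuno v ≤ T)
    (hgap : ∀ y, brjuno y ≤ T → y ∉ Set.uIoo u v) {N : ℕ} (hN : 1 ≤ N)
    (hagree : ∀ k < N, pquot u k = pquot v k) (hlt : pquot u N < pquot v N) :
    2 ≤ pquot v N ∧ pquot u N = pquot v N - 1 ∧
      (∀ k : ℕ, 1 ≤ k → pquot v (N + 2 * k) = 1) ∧ (∀ k : ℕ, pquot u (N + 2 * k + 1) = 1) := by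
  have hsign : ∀ k, (-1 : ℝ) ^ (N + 2 * k) = (-1) ^ N := fun k => by
    rw [pow_add, pow_mul, neg_one_sq, one_pow, mul_one]
  have hu1 := one_le_pquot hu hN
  refine ⟨by omega, ?_, fun k hk => ?_, fun k => ?_⟩
  · by_contra hne
    obtain ⟨y, hy, hyT, hyv, hyN⟩ := exists_brjuno_le_of_two_le_pquot hv (M := N) (by omega)
    refine hgap y (hyT.trans hvT) (mem_uIoo_of_neg_one_pow_mul_pos (m := N) ?_ ?_)
    · exact neg_one_pow_mul_sub_pos_of_pquot_lt hu hy
        (fun j hj => (hagree j hj).trans (hyv j hj).symm) (by omega)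
    · exact neg_one_pow_mul_sub_pos_of_pquot_lt hy hv hyv (by omega)
  · by_contra hne
    have h2 : 2 ≤ pquot v (N + 2 * k) := by
      have := one_le_pquot hv (n := N + 2 * k) (by omega)
      omega
    obtain ⟨y, hy, hyT, hyv, hyM⟩ := exists_brjuno_le_of_two_le_pquot hv h2
    refine hgap y (hyT.trans hvT) (mem_uIoo_of_neg_one_pow_mul_pos (m := N) ?_ ?_)
    · refine neg_one_pow_mul_sub_pos_of_pquot_lt hu hy
        (fun j hj => (hagree j hj).trans (hyv j (by omega)).symm) ?_
      rwa [hyv N (by omega)]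
    · rw [← hsign k]
      exact neg_one_pow_mul_sub_pos_of_pquot_lt hy hv hyv (by omega)
  · by_contra hne
    have h2 : 2 ≤ pquot u (N + 2 * k + 1) := by
      have := one_le_pquot hu (n := N + 2 * k + 1) (by omega)
      omega
    obtain ⟨y, hy, hyT, hyu, hyM⟩ := exists_brjuno_le_of_two_le_pquot hu h2
    refine hgap y (hyT.trans huT) (mem_uIoo_of_neg_one_pow_mul_pos (m := N) ?_ ?_)
    · have := neg_one_pow_mul_sub_pos_of_pquot_lt hy hu hyu (by omega)
      rw [pow_succ, hsign] at this
      linarith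
    · refine neg_one_pow_mul_sub_pos_of_pquot_lt hy hv
        (fun j hj => (hyu j (by omega)).trans (hagree j hj)) ?_
      rwa [hyu N (by omega)]

theorem mem_connectedComponentIn_of_mem_closure {X : Type*} [TopologicalSpace X] {A : Set X}
    {x c : X} (hx : x ∈ A) (hc : c ∈ closure (connectedComponentIn A x)) (hcA : c ∈ A) :
    c ∈ connectedComponentIn A x := by
  have hpre : IsPreconnected (insert c (connectedComponentIn A x)) :=
    isPreconnected_connectedComponentIn.subset_closure (Set.subset_insert _ _)
      (Set.insert_subset hc subset_closure)
  exact hpre.subset_connectedComponentIn (Set.mem_insert_of_mem _ (mem_connectedComponentIn hx))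
    (Set.insert_subset hcA (connectedComponentIn_subset _ _)) (Set.mem_insert _ _)

theorem irrational_and_brjuno_le_of_connectedComponentIn_eq_Ioo {t x a b c : ℝ}
    (hx : x ∈ brjunoSuper t) (hcc : connectedComponentIn (brjunoSuper t) x = Set.Ioo a b)
    (hc : c = a ∨ c = b) : Irrational c ∧ brjuno c ≤ ENNReal.ofReal t := by
  have hab : a < b := Set.nonempty_Ioo.1 ⟨x, hcc ▸ mem_connectedComponentIn hx⟩
  have hle : brjuno c ≤ ENNReal.ofReal t := by
    refine not_lt.1 fun hct => ?_
    have hmem := mem_connectedComponentIn_of_mem_closure hx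
      (by rw [hcc, closure_Ioo hab.ne]; rcases hc with rfl | rfl <;> simp [hab.le]) hct
    rw [hcc] at hmem
    rcases hc with rfl | rfl
    · exact hmem.1.false
    · exact hmem.2.false
  exact ⟨irrational_of_brjuno_ne_top (hle.trans_lt ENNReal.ofReal_lt_top).ne, hle⟩

theorem statement6_general (t : ℝ) (ξm ξp : ℝ)
    (hcomp : ∃ x ∈ brjunoSuper t,
      connectedComponentIn (brjunoSuper t) x = Set.Ioo ξm ξp)
    (N : ℕ) (hN : 1 ≤ N)
    (hagree : ∀ k < N, pquot ξm k = pquot ξp k)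
    (hdiff : pquot ξm N ≠ pquot ξp N) :
    (Even N →
      2 ≤ pquot ξp N ∧ pquot ξm N = pquot ξp N - 1 ∧
      (∀ k : ℕ, 1 ≤ k → pquot ξp (N + 2 * k) = 1) ∧
      (∀ k : ℕ, pquot ξm (N + 2 * k + 1) = 1)) ∧
    (Odd N →
      2 ≤ pquot ξm N ∧ pquot ξp N = pquot ξm N - 1 ∧
      (∀ k : ℕ, 1 ≤ k → pquot ξm (N + 2 * k) = 1) ∧
      (∀ k : ℕ, pquot ξp (N + 2 * k + 1) = 1)) := by
  obtain ⟨x, hx, hcc⟩ := hcomp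
  obtain ⟨hm, hmt⟩ := irrational_and_brjuno_le_of_connectedComponentIn_eq_Ioo hx hcc (.inl rfl)
  obtain ⟨hp, hpt⟩ := irrational_and_brjuno_le_of_connectedComponentIn_eq_Ioo hx hcc (.inr rfl)
  have hlt : ξm < ξp := Set.nonempty_Ioo.1 ⟨x, hcc ▸ mem_connectedComponentIn hx⟩
  have hgap : ∀ y, brjuno y ≤ ENNReal.ofReal t → y ∉ Set.uIoo ξm ξp := fun y hy hmem =>
    ((hcc ▸ connectedComponentIn_subset _ _ : Set.Ioo ξm ξp ⊆ brjunoSuper t)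
      (Set.uIoo_of_lt hlt ▸ hmem)).not_ge hy
  refine ⟨fun hev => ?_, fun hodd => ?_⟩
  · refine pquot_of_forall_brjuno_le_notMem_uIoo hm hp hmt hpt hgap hN hagree
      ((lt_or_gt_of_ne hdiff).resolve_right fun h => ?_)
    have := neg_one_pow_mul_sub_pos_of_pquot_lt hp hm (fun k hk => (hagree k hk).symm) h
    rw [hev.neg_one_pow] at this
    linarith
  · refine pquot_of_forall_brjuno_le_notMem_uIoo hp hm hpt hmt (Set.uIoo_comm ξm ξp ▸ hgap) hN
      (fun k hk => (hagree k hk).symm) ((lt_or_gt_of_ne hdiff).resolve_left fun h => ?_)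
    have := neg_one_pow_mul_sub_pos_of_pquot_lt hm hp hagree h
    rw [hodd.neg_one_pow] at this
    linarith

/-- structure of the continued fraction expansions of the endpoints of a
connected component of `A_t` containing no integer, after the first index `N` where
they differ. -/
theorem statement6 (t : ℝ) (ht : 0 ≤ t) (ξm ξp : ℝ)
    (hcomp : ∃ x ∈ brjunoSuper t,
      connectedComponentIn (brjunoSuper t) x = Set.Ioo ξm ξp)
    (hnoint : ∀ n : ℤ, (n : ℝ) ∉ Set.Ioo ξm ξp)
    (N : ℕ) (hN : 1 ≤ N)
    (hagree : ∀ k < N, pquot ξm k = pquot ξp k)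
    (hdiff : pquot ξm N ≠ pquot ξp N) :
    (Even N →
      2 ≤ pquot ξp N ∧ pquot ξm N = pquot ξp N - 1 ∧
      (∀ k : ℕ, 1 ≤ k → pquot ξp (N + 2 * k) = 1) ∧
      (∀ k : ℕ, pquot ξm (N + 2 * k + 1) = 1)) ∧
    (Odd N →
      2 ≤ pquot ξm N ∧ pquot ξp N = pquot ξm N - 1 ∧
      (∀ k : ℕ, 1 ≤ k → pquot ξm (N + 2 * k) = 1) ∧
      (∀ k : ℕ, pquot ξp (N + 2 * k + 1) = 1)) :=
  statement6_general t ξm ξp hcomp N hN hagree hdiff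
end
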